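/- arXiv:2506.15561 — 2 statements merged into one kernel-verified Lean document; each statement's English description precedes it below -/
import Mathlib

section
/- Let G be a partially directed graph on a finite vertex set V that is strictly acyclic and satisfies: whenever I→J is a directed edge and J—K is an undirected edge of G, the vertices I and K are adjacent. Let X and Y be disjoint vertex subsets such that G has no proper semi-directed path from X to Y that starts with an undirected edge. Then no chain component of G intersects both X and An_{G_{V∖X}}(Y), where G_{V∖X} is the induced subgraph of G on V∖X. -/
open scoped Classical

/-- A partially directed graph on vertex type `V`: directed edges `dir i j` (i→j) and
undirected edges `undir i j` (i—j), with at most one edge between any two vertices. -/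
structure PDG (V : Type) where
  dir : V → V → Prop
  undir : V → V → Prop
  undir_symm : ∀ i j, undir i j → undir j i
  undir_irrefl : ∀ i, ¬ undir i i
  dir_irrefl : ∀ i, ¬ dir i i
  not_dir_dir : ∀ i j, dir i j → ¬ dir j i
  not_dir_undir : ∀ i j, dir i j → ¬ undir i j

namespace PDG

variable {V : Type}

/-- Adjacency: joined by some edge. -/
def Adj (G : PDG V) (i j : V) : Prop := G.dir i j ∨ G.dir j i ∨ G.undir i j

/-- A semi-directed step from `i` to `j`: an undirected edge or a directed edge `i→j`. -/
def SStep (G : PDG V) (i j : V) : Prop := G.dir i j ∨ G.undir i j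

/-- Existence of a semi-directed cycle: `f 0, …, f m` with `f 0 = f m`, `m ≥ 2`,
each consecutive pair a semi-directed step, at least one step directed. -/
def HasSemiDirectedCycle (G : PDG V) : Prop :=
  ∃ (m : ℕ) (f : ℕ → V), 2 ≤ m ∧ f 0 = f m ∧
    (∀ i < m, G.SStep (f i) (f (i + 1))) ∧ (∃ i < m, G.dir (f i) (f (i + 1)))

/-- Strictly acyclic: no semi-directed cycle. -/
def StrictlyAcyclic (G : PDG V) : Prop := ¬ G.HasSemiDirectedCycle

/-- Joined by a path of undirected edges (possibly trivial). -/
def sameChain (G : PDG V) (i j : V) : Prop := Relation.ReflTransGen G.undir i j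

/-- The chain component of a vertex. -/
def chainComp (G : PDG V) (i : V) : Set V := {j | G.sameChain i j}

/-- Parents of a vertex set. -/
def Pa (G : PDG V) (D : Set V) : Set V := {i | ∃ d ∈ D, G.dir i d}

/-- Ancestors of a vertex set (directed path, possibly of length 0). -/
def An (G : PDG V) (D : Set V) : Set V := {i | ∃ d ∈ D, Relation.ReflTransGen G.dir i d}

/-- A DAG: only directed edges, and no directed cycles. -/
def IsDAG (G : PDG V) : Prop :=
  (∀ i j, ¬ G.undir i j) ∧ ∀ i, ¬ Relation.TransGen G.dir i i

/-- Unshielded collider `(i, k, j)`: `i→k ← j` with `i`, `j` distinct and non-adjacent. -/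
def UC (G : PDG V) (i k j : V) : Prop :=
  i ≠ j ∧ G.dir i k ∧ G.dir j k ∧ ¬ G.Adj i j

/-- `D ∈ [G]`: `D` is a DAG with the same skeleton as `G`, containing every directed edge
of `G`, all of whose unshielded colliders are unshielded colliders of `G`. -/
def InClass (D G : PDG V) : Prop :=
  D.IsDAG ∧ (∀ i j, D.Adj i j ↔ G.Adj i j) ∧ (∀ i j, G.dir i j → D.dir i j) ∧
    (∀ i k j, D.UC i k j → G.UC i k j)

/-- `C` is a nonempty set, connected by undirected edges within `C`, receiving a directed
edge from `I` and one from `J`. -/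
def ComplexCand (G : PDG V) (I : V) (C : Set V) (J : V) : Prop :=
  C.Nonempty ∧
  (∀ a ∈ C, ∀ b ∈ C,
    Relation.ReflTransGen (fun x y => G.undir x y ∧ x ∈ C ∧ y ∈ C) a b) ∧
  (∃ c ∈ C, G.dir I c) ∧ (∃ c ∈ C, G.dir J c)

/-- Minimal complex `(I, C, J)` of `G`. -/
def MinimalComplex (G : PDG V) (I : V) (C : Set V) (J : V) : Prop :=
  I ≠ J ∧ ¬ G.Adj I J ∧ (∀ a ∈ C, ∀ b ∈ C, G.sameChain a b) ∧
  G.ComplexCand I C J ∧ ∀ C' ⊂ C, ¬ G.ComplexCand I C' J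

/-- Remove all directed edges pointing into `S`. -/
def removeInto (G : PDG V) (S : Set V) : PDG V where
  dir i j := G.dir i j ∧ j ∉ S
  undir := G.undir
  undir_symm := G.undir_symm
  undir_irrefl := G.undir_irrefl
  dir_irrefl i h := G.dir_irrefl i h.1
  not_dir_dir i j h h' := G.not_dir_dir i j h.1 h'.1
  not_dir_undir i j h h' := G.not_dir_undir i j h.1 h'

/-- Induced subgraph on the vertex set `D` (kept on the same vertex type; edges
outside `D` are discarded). -/
def induce (G : PDG V) (D : Set V) : PDG V where
  dir i j := G.dir i j ∧ i ∈ D ∧ j ∈ D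
  undir i j := G.undir i j ∧ i ∈ D ∧ j ∈ D
  undir_symm i j h := ⟨G.undir_symm i j h.1, h.2.2, h.2.1⟩
  undir_irrefl i h := G.undir_irrefl i h.1
  dir_irrefl i h := G.dir_irrefl i h.1
  not_dir_dir i j h h' := G.not_dir_dir i j h.1 h'.1
  not_dir_undir i j h h' := G.not_dir_undir i j h.1 h'.1

/-- `G(↛X)`: `G` with every directed edge into `X ∩ An_G(Y)` removed. -/
def noInto (G : PDG V) (X Y : Set V) : PDG V := G.removeInto (X ∩ G.An Y)

/-- `RM(G; X, Y)`: the induced subgraph of `G(↛X)` on `An_{G(↛X)}(Y)`. -/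
def RM (G : PDG V) (X Y : Set V) : PDG V :=
  (G.noInto X Y).induce ((G.noInto X Y).An Y)

/-- There is a proper semi-directed path from `X` to `Y` starting with an undirected
edge: distinct vertices `f 0 ∈ X, …, f m ∈ Y`, only `f 0` in `X`, each consecutive pair a
semi-directed step, the first edge undirected. -/
def HasProperUndirStartPath (G : PDG V) (X Y : Set V) : Prop :=
  ∃ (m : ℕ) (f : ℕ → V), 1 ≤ m ∧
    (∀ i ≤ m, ∀ j ≤ m, f i = f j → i = j) ∧
    f 0 ∈ X ∧ f m ∈ Y ∧ (∀ i < m, G.SStep (f i) (f (i + 1))) ∧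
    (∀ i, 1 ≤ i → i ≤ m → f i ∉ X) ∧ G.undir (f 0) (f 1)

/-- Membership in the chain decomposition `CD_G(D)`: the nonempty intersections of `D`
with chain components of `G`. -/
def CDmem (G : PDG V) (D S : Set V) : Prop :=
  S.Nonempty ∧ ∃ i, S = D ∩ G.chainComp i

end PDG

noncomputable section Prob

open PDG

variable {V : Type} [Fintype V] [DecidableEq V] {𝒳 : V → Type} [∀ i, Fintype (𝒳 i)]
  [∀ i, Nonempty (𝒳 i)]

/-- Marginal `p_S(v_S)`: sum of `p` over configurations agreeing with `v` on `S`. -/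
def marginal (p : (∀ i, 𝒳 i) → ℝ) (S : Set V) (v : ∀ i, 𝒳 i) : ℝ :=
  ∑ w : ∀ i, 𝒳 i, if ∀ i ∈ S, w i = v i then p w else 0

/-- Conditional `p(v_A | v_S) = p_{A∪S}(v_{A∪S}) / p_S(v_S)`. -/
def condP (p : (∀ i, 𝒳 i) → ℝ) (A S : Set V) (v : ∀ i, 𝒳 i) : ℝ :=
  marginal p (A ∪ S) v / marginal p S v

/-- A strictly positive pmf. -/
def IsPositivePMF (p : (∀ i, 𝒳 i) → ℝ) : Prop :=
  (∀ v, 0 < p v) ∧ ∑ v : ∀ i, 𝒳 i, p v = 1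

/-- `p` factorizes according to the DAG `D`. -/
def FactorizesDAG (p : (∀ i, 𝒳 i) → ℝ) (D : PDG V) : Prop :=
  ∀ v, p v = ∏ i : V, condP p {i} (D.Pa {i}) v

/-- The (finitely many) chain components of `G`. -/
def chainComponents (G : PDG V) : Finset (Set V) :=
  Finset.univ.image (fun i => G.chainComp i)

/-- The outer chain-graph factorization `∏_τ p(v_τ | v_{Pa_G(τ)})` over chain
components `τ` of `G`. -/
def chainProd (G : PDG V) (p : (∀ i, 𝒳 i) → ℝ) (v : ∀ i, 𝒳 i) : ℝ :=
  ∏ τ ∈ chainComponents G, condP p τ (G.Pa τ) v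

/-- The product `∏_j p(v_{D_j} | v_{Pa_G(D_j)})` over the chain decomposition
`CD_G(D) = {D_1,…,D_k}` (empty intersections contribute a factor `1`). -/
def cdProd (G : PDG V) (p : (∀ i, 𝒳 i) → ℝ) (D : Set V) (v : ∀ i, 𝒳 i) : ℝ :=
  ∏ τ ∈ chainComponents G, condP p (D ∩ τ) (G.Pa (D ∩ τ)) v

/-- The identification formula (g-formula) of Perković's theorem:
`Σ_b ∏_j p(b_j | pa_G(B_j))` where `{B_1,…,B_k} = CD_G(An_{G_{V∖X}}(Y))`,
the sum running over configurations of `B = An_{G_{V∖X}}(Y) ∖ Y`, all other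
coordinates (in particular the intervened values on `X` and the values on `Y`)
being fixed by `v`. -/
def gFormula (G : PDG V) (p : (∀ i, 𝒳 i) → ℝ) (X Y : Set V) (v : ∀ i, 𝒳 i) : ℝ :=
  ∑ w : ∀ i, 𝒳 i,
    if ∀ i, i ∉ (G.induce Xᶜ).An Y \ Y → w i = v i then
      cdProd G p ((G.induce Xᶜ).An Y) w
    else 0

/-- The re-weighting formula `Σ_{v'} p(v) / ∏_j p(x_j | pa_G(X_j))`, where
`{X_1,…,X_m} = CD_G(X ∩ An_G(Y))` and the sum runs over configurations of
`V ∖ (X ∪ Y)`, the coordinates on `X ∪ Y` being fixed by `v`. -/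
def rwFormula (G : PDG V) (p : (∀ i, 𝒳 i) → ℝ) (X Y : Set V) (v : ∀ i, 𝒳 i) : ℝ :=
  ∑ w : ∀ i, 𝒳 i,
    if ∀ i ∈ X ∪ Y, w i = v i then p w / cdProd G p (X ∩ G.An Y) w else 0

/-- The `Y`-marginal of the truncated factorization of `p` with respect to the DAG `D`:
`Σ_{v_{V∖(X∪Y)}} ∏_{i ∈ V∖X} p(v_i | v_{Pa_D(i)})`, the coordinates on `X ∪ Y` being
fixed by `v`. -/
def truncMarg (D : PDG V) (p : (∀ i, 𝒳 i) → ℝ) (X Y : Set V) (v : ∀ i, 𝒳 i) : ℝ :=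
  ∑ w : ∀ i, 𝒳 i,
    if ∀ i ∈ X ∪ Y, w i = v i then
      ∏ i ∈ Finset.univ.filter (fun i => i ∉ X), condP p {i} (D.Pa {i}) w
    else 0

end Prob

/-!
Suppose `x ∈ X` and `a ∈ An_{G_{V∖X}}(Y)` lie in one chain component. Then `a ∉ X`, and along an
undirected path from `x` to `a` take the last edge `x' — b` leaving `X`; continuing from `b` to `a`
and then along a directed path in `G_{V∖X}` to `Y` gives a semi-directed walk from `x'` to `Y` that
starts with an undirected edge and never returns to `X`. Erasing its loops (which cannot remove the
first edge, since `x'` is its only vertex in `X`) yields a proper semi-directed path from `X` to `Y`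
starting with an undirected edge.
-/

section SeqCons

variable {α : Type*} {a : α} {f : ℕ → α} {m : ℕ}

def seqCons (a : α) (f : ℕ → α) : ℕ → α
  | 0 => a
  | i + 1 => f i

theorem chain_seqCons {r : α → α → Prop} (ha : r a (f 0))
    (hf : ∀ i < m, r (f i) (f (i + 1))) :
    ∀ i < m + 1, r (seqCons a f i) (seqCons a f (i + 1))
  | 0, _ => ha
  | i + 1, hi => hf i (by omega)

theorem injOn_seqCons (hf : Set.InjOn f (Set.Iic m)) (ha : ∀ i ≤ m, f i ≠ a) :
    Set.InjOn (seqCons a f) (Set.Iic (m + 1)) := by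
  rintro (_ | i) hi (_ | j) hj hij
  · rfl
  · exact absurd hij.symm (ha j (by simpa using hj))
  · exact absurd hij (ha i (by simpa using hi))
  · simp only [Set.mem_Iic] at hi hj
    exact congrArg (· + 1) (hf (Set.mem_Iic.2 (by omega)) (Set.mem_Iic.2 (by omega)) hij)

end SeqCons

namespace Relation

variable {α : Type*} {r : α → α → Prop} {a b : α}

theorem ReflTransGen.exists_injOn_chain (h : ReflTransGen r a b) :
    ∃ (m : ℕ) (f : ℕ → α), f 0 = a ∧ f m = b ∧ (∀ i < m, r (f i) (f (i + 1))) ∧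
      Set.InjOn f (Set.Iic m) := by
  induction h using ReflTransGen.head_induction_on with
  | refl => exact ⟨0, fun _ => b, rfl, rfl, by simp, fun _ _ _ _ _ => by simp_all⟩
  | @head a c hac _ ih =>
    obtain ⟨m, f, rfl, hfm, hf, hinj⟩ := ih
    by_cases hmem : ∃ k ≤ m, f k = a
    · obtain ⟨k, hk, rfl⟩ := hmem
      refine ⟨m - k, fun i => f (i + k), by simp, by simpa [Nat.sub_add_cancel hk] using hfm,
        fun i hi => ?_, fun i hi j hj hij => ?_⟩
      · simpa only [Nat.add_right_comm i 1 k] using hf (i + k) (by omega)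
      · simp only [Set.mem_Iic] at hi hj
        have := hinj (Set.mem_Iic.2 (by omega)) (Set.mem_Iic.2 (by omega)) hij
        omega
    · push Not at hmem
      exact ⟨m + 1, seqCons a f, rfl, hfm, chain_seqCons hac hf, injOn_seqCons hinj hmem⟩

theorem ReflTransGen.exists_last_exit {s : Set α} (h : ReflTransGen r a b) (ha : a ∈ s)
    (hb : b ∉ s) :
    ∃ c ∈ s, ∃ d ∉ s, r c d ∧ ReflTransGen (fun p q => r p q ∧ q ∉ s) d b := by
  induction h with
  | refl => exact absurd ha hb
  | @tail c b _ hcb ih =>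
    by_cases hc : c ∈ s
    · exact ⟨c, hc, b, hb, hcb, .refl⟩
    · obtain ⟨x, hx, d, hd, hxd, hdc⟩ := ih hc
      exact ⟨x, hx, d, hd, hxd, hdc.tail ⟨hcb, hb⟩⟩

end Relation

namespace PDG

open Relation

variable {V : Type} {G : PDG V}

theorem sameChain.symm {i j : V} (h : G.sameChain i j) : G.sameChain j i :=
  haveI : Std.Symm G.undir := ⟨G.undir_symm⟩
  Std.Symm.symm (r := ReflTransGen G.undir) _ _ h

theorem mem_union_of_mem_An_induce {D Y : Set V} {a : V} (ha : a ∈ (G.induce D).An Y) :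
    a ∈ D ∪ Y := by
  obtain ⟨d, hdY, had⟩ := ha
  rcases had.cases_head with rfl | ⟨c, hac, -⟩
  exacts [Or.inr hdY, Or.inl hac.2.1]

theorem hasProperUndirStartPath_of_reflTransGen {X Y : Set V} {x b y : V} (hx : x ∈ X)
    (hxb : G.undir x b) (hb : b ∉ X) (hy : y ∈ Y)
    (hby : ReflTransGen (fun p q => G.SStep p q ∧ q ∉ X) b y) :
    G.HasProperUndirStartPath X Y := by
  obtain ⟨m, f, rfl, rfl, hf, hinj⟩ := hby.exists_injOn_chain
  have hfX : ∀ i ≤ m, f i ∉ X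
    | 0, _ => hb
    | i + 1, hi => (hf i (by omega)).2
  refine ⟨m + 1, seqCons x f, by omega, injOn_seqCons hinj fun i hi h => hfX i hi (h ▸ hx),
    hx, hy, chain_seqCons (Or.inr hxb) fun i hi => (hf i hi).1, ?_, hxb⟩
  rintro (_ | i) h1 h2
  exacts [absurd h1 (by omega), hfX i (by omega)]

end PDG

theorem stmt7_general {V : Type} (G : PDG V)
    (X Y : Set V) (hXY : Disjoint X Y)
    (hpath : ¬ G.HasProperUndirStartPath X Y) :
    ∀ i : V, ¬ ((G.chainComp i ∩ X).Nonempty ∧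
      (G.chainComp i ∩ (G.induce Xᶜ).An Y).Nonempty) := by
  rintro i ⟨⟨x, hxi, hxX⟩, ⟨a, hai, haAn⟩⟩
  have haX : a ∉ X := fun haX =>
    (PDG.mem_union_of_mem_An_induce haAn).elim (· haX) (hXY.ne_of_mem haX · rfl)
  obtain ⟨d, hdY, had⟩ := haAn
  have hxa : G.sameChain x a := (PDG.sameChain.symm hxi).trans hai
  obtain ⟨x', hx'X, b, hbX, hx'b, hba⟩ := hxa.exists_last_exit hxX haX
  have hbd : Relation.ReflTransGen (fun p q => G.SStep p q ∧ q ∉ X) b d :=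
    .trans (Relation.ReflTransGen.mono (fun _ _ h => ⟨Or.inr h.1, h.2⟩) _ _ hba)
      (Relation.ReflTransGen.mono (fun _ _ h => ⟨Or.inl h.1, h.2.2⟩) _ _ had)
  exact hpath (PDG.hasProperUndirStartPath_of_reflTransGen hx'X hx'b hbX hdY hbd)

/-- If `G` is strictly acyclic with `I→J, J—K ⇒ I, K` adjacent and there is
no proper semi-directed path from `X` to `Y` starting with an undirected edge, then no
chain component of `G` intersects both `X` and `An_{G_{V∖X}}(Y)`. -/
theorem stmt7 {V : Type} [Fintype V] (G : PDG V)
    (hSA : G.StrictlyAcyclic)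
    (hMeek : ∀ I J K : V, G.dir I J → G.undir J K → G.Adj I K)
    (X Y : Set V) (hXY : Disjoint X Y)
    (hpath : ¬ G.HasProperUndirStartPath X Y) :
    ∀ i : V, ¬ ((G.chainComp i ∩ X).Nonempty ∧
      (G.chainComp i ∩ (G.induce Xᶜ).An Y).Nonempty) :=
  stmt7_general G X Y hXY hpath
end

section
/- Let V be a finite set, 𝒳_i finite nonempty sets for i∈V, and p a strictly positive pmf on ∏_{i∈V}𝒳_i. Let D_1 be a DAG on V containing a directed edge a→b that is covered, i.e., Pa_{D_1}({b}) = Pa_{D_1}({a}) ∪ {a}, and let D_2 be the graph obtained from D_1 by replacing a→b with b→a. Then D_2 is a DAG, and for every configuration v, ∏_{i∈V} p(v_i | v_{Pa_{D_1}(i)}) = ∏_{i∈V} p(v_i | v_{Pa_{D_2}(i)}). -/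
open scoped Classical

/-!
Reversing a covered edge `a → b` changes only two parent sets: with `A = Pa(a)`, the parents
of `a` become `A ∪ {b}` and those of `b` become `A`. The two pairs of factors at `a` and `b`
are then the two chain-rule expansions `p(v_a | v_A) p(v_b | v_{A ∪ a})` and
`p(v_b | v_A) p(v_a | v_{A ∪ b})` of `p(v_a, v_b | v_A)`, so the products agree.
A directed cycle after the reversal must use `b → a`, hence yields a second route from `a` to
`b` in the original DAG; its last edge `c → b` has `c ≠ a`, so covering gives `c → a` and a
cycle through `a`.
-/

namespace Relation

variable {α : Type*}

def deleteEdge (r : α → α → Prop) (a b : α) (x y : α) : Prop :=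
  r x y ∧ ¬(x = a ∧ y = b)

def reverseEdge (r : α → α → Prop) (a b : α) (x y : α) : Prop :=
  deleteEdge r a b x y ∨ (x = b ∧ y = a)

variable {r : α → α → Prop} {a b : α}

theorem deleteEdge_le : deleteEdge r a b ≤ r := fun _ _ h => h.1

theorem not_reflTransGen_deleteEdge (hr : ∀ x, ¬TransGen r x x)
    (hcov : ∀ c, r c b → c = a ∨ r c a) (hne : a ≠ b) :
    ¬ReflTransGen (deleteEdge r a b) a b := by
  intro h
  rcases h.cases_tail with rfl | ⟨c, hac, hcb⟩
  · exact hne rfl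
  · rcases hcov c hcb.1 with rfl | hca
    · exact hcb.2 ⟨rfl, rfl⟩
    · exact hr a (TransGen.tail' (ReflTransGen.mono deleteEdge_le _ _ hac) hca)

theorem reflTransGen_reverseEdge {x y : α} (h : ReflTransGen (reverseEdge r a b) x y) :
    ReflTransGen (deleteEdge r a b) x y ∨
      ReflTransGen (deleteEdge r a b) x b ∧ ReflTransGen (deleteEdge r a b) a y := by
  induction h with
  | refl => exact Or.inl .refl
  | tail _ hyz ih =>
    rcases hyz with hyz | ⟨rfl, rfl⟩
    · exact ih.imp (·.tail hyz) fun ⟨hxb, hay⟩ => ⟨hxb, hay.tail hyz⟩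
    · exact Or.inr ⟨ih.elim id And.left, .refl⟩

theorem not_transGen_reverseEdge (hr : ∀ x, ¬TransGen r x x)
    (hcov : ∀ c, r c b → c = a ∨ r c a) (hne : a ≠ b) (x : α) :
    ¬TransGen (reverseEdge r a b) x x := by
  have hab := not_reflTransGen_deleteEdge hr hcov hne
  intro h
  obtain ⟨c, hxc, hcx⟩ := TransGen.head'_iff.1 h
  rcases hxc with hxc | ⟨rfl, rfl⟩
  · rcases reflTransGen_reverseEdge hcx with hcx | ⟨hcb, hax⟩
    · exact hr x (TransGen.mono deleteEdge_le _ _ (TransGen.head' hxc hcx))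
    · exact hab ((hax.tail hxc).trans hcb)
  · exact hab ((reflTransGen_reverseEdge hcx).elim id And.left)

end Relation

namespace PDG

open Relation

variable {V : Type} {D₁ D₂ : PDG V} {a b : V}

@[simp]
theorem mem_Pa_singleton {G : PDG V} {i x : V} : i ∈ G.Pa {x} ↔ G.dir i x := by
  simp [Pa]

theorem Pa_singleton_reverseEdge_of_ne (h : D₂.dir = reverseEdge D₁.dir a b) {i : V}
    (hia : i ≠ a) (hib : i ≠ b) : D₂.Pa {i} = D₁.Pa {i} := by
  ext j
  simp [h, reverseEdge, deleteEdge, hia, hib]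

theorem Pa_singleton_reverseEdge_tail (h : D₂.dir = reverseEdge D₁.dir a b) :
    D₂.Pa {a} = D₁.Pa {a} ∪ {b} := by
  ext j
  have := D₁.dir_irrefl a
  simp only [mem_Pa_singleton, h, reverseEdge, deleteEdge, Set.mem_union,
    Set.mem_singleton_iff]
  grind

theorem Pa_singleton_reverseEdge_head (h : D₂.dir = reverseEdge D₁.dir a b)
    (hcov : D₁.Pa {b} = D₁.Pa {a} ∪ {a}) : D₂.Pa {b} = D₁.Pa {a} := by
  ext j
  have hcov' := Set.ext_iff.1 hcov
  have := D₁.dir_irrefl a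
  simp only [mem_Pa_singleton, h, reverseEdge, deleteEdge, Set.mem_union,
    Set.mem_singleton_iff] at hcov' ⊢
  grind

end PDG

section Prob

variable {V : Type} [Fintype V] [DecidableEq V] {𝒳 : V → Type} [∀ i, Fintype (𝒳 i)]
  {p : (∀ i, 𝒳 i) → ℝ}

theorem marginal_pos (hp : ∀ v, 0 < p v) (S : Set V) (v : ∀ i, 𝒳 i) :
    0 < marginal p S v :=
  Finset.sum_pos' (fun w _ => by split_ifs <;> simp [(hp w).le])
    ⟨v, Finset.mem_univ v, by simp [hp v]⟩

theorem condP_mul_condP {X Y A : Set V} {v : ∀ i, 𝒳 i} (h : marginal p (X ∪ A) v ≠ 0) :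
    condP p X A v * condP p Y (X ∪ A) v = condP p (Y ∪ X) A v := by
  rw [condP, condP, condP, Set.union_assoc]
  field_simp

theorem condP_mul_condP_comm (hp : ∀ v, 0 < p v) (X Y A : Set V) (v : ∀ i, 𝒳 i) :
    condP p X A v * condP p Y (A ∪ X) v = condP p X (A ∪ Y) v * condP p Y A v := by
  rw [Set.union_comm A X, Set.union_comm A Y, mul_comm (condP p X (Y ∪ A) v),
    condP_mul_condP (marginal_pos hp _ v).ne', condP_mul_condP (marginal_pos hp _ v).ne',
    Set.union_comm]

end Prob

theorem Finset.prod_univ_eq_of_mul_eq {ι M : Type*} [Fintype ι] [DecidableEq ι] [CommMonoid M]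
    {f g : ι → M} {a b : ι} (hne : a ≠ b) (hab : f a * f b = g a * g b)
    (hrest : ∀ i, i ≠ a → i ≠ b → f i = g i) : ∏ i, f i = ∏ i, g i := by
  rw [← Finset.prod_sdiff (Finset.subset_univ {a, b}),
    ← Finset.prod_sdiff (Finset.subset_univ {a, b}), Finset.prod_pair hne,
    Finset.prod_pair hne, hab]
  congr 1
  refine Finset.prod_congr rfl fun i hi => hrest i ?_ ?_ <;> simp_all

open PDG Relation in
theorem stmt8_general {V : Type} [Fintype V] [DecidableEq V]
    (𝒳 : V → Type) [∀ i, Fintype (𝒳 i)]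
    (p : (∀ i, 𝒳 i) → ℝ) (hp : IsPositivePMF p)
    (D₁ D₂ : PDG V) (h₁ : D₁.IsDAG) (a b : V)
    (hcov : D₁.Pa {b} = D₁.Pa {a} ∪ {a})
    (h₂undir : ∀ i j : V, ¬ D₂.undir i j)
    (h₂dir : ∀ i j : V, D₂.dir i j ↔
      ((D₁.dir i j ∧ ¬(i = a ∧ j = b)) ∨ (i = b ∧ j = a))) :
    D₂.IsDAG ∧
      ∀ v : ∀ i, 𝒳 i,
        ∏ i : V, condP p {i} (D₁.Pa {i}) v = ∏ i : V, condP p {i} (D₂.Pa {i}) v := by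
  have hdir : D₂.dir = reverseEdge D₁.dir a b := funext₂ fun i j => propext (h₂dir i j)
  have hPa_b (c : V) : D₁.dir c b ↔ c = a ∨ D₁.dir c a := by
    simpa [or_comm] using Set.ext_iff.1 hcov c
  have hne : a ≠ b := fun h => D₁.dir_irrefl a (h ▸ (hPa_b a).2 (Or.inl rfl))
  refine ⟨⟨h₂undir, hdir ▸ not_transGen_reverseEdge h₁.2 (fun c => (hPa_b c).1) hne⟩,
    fun v => Finset.prod_univ_eq_of_mul_eq hne ?_ fun i hia hib => ?_⟩
  · rw [Pa_singleton_reverseEdge_tail hdir, Pa_singleton_reverseEdge_head hdir hcov, hcov]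
    exact condP_mul_condP_comm hp.1 _ _ _ v
  · rw [Pa_singleton_reverseEdge_of_ne hdir hia hib]

/-- Reversing a covered edge `a→b` of a DAG `D₁` yields a DAG `D₂`, and the
DAG factorizations of any strictly positive pmf with respect to `D₁` and `D₂` have the
same evaluation at every configuration. -/
theorem stmt8 {V : Type} [Fintype V] [DecidableEq V]
    (𝒳 : V → Type) [∀ i, Fintype (𝒳 i)] [∀ i, Nonempty (𝒳 i)]
    (p : (∀ i, 𝒳 i) → ℝ) (hp : IsPositivePMF p)
    (D₁ D₂ : PDG V) (h₁ : D₁.IsDAG) (a b : V)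
    (hab : D₁.dir a b)
    (hcov : D₁.Pa {b} = D₁.Pa {a} ∪ {a})
    (h₂undir : ∀ i j : V, ¬ D₂.undir i j)
    (h₂dir : ∀ i j : V, D₂.dir i j ↔
      ((D₁.dir i j ∧ ¬(i = a ∧ j = b)) ∨ (i = b ∧ j = a))) :
    D₂.IsDAG ∧
      ∀ v : ∀ i, 𝒳 i,
        ∏ i : V, condP p {i} (D₁.Pa {i}) v = ∏ i : V, condP p {i} (D₂.Pa {i}) v :=
  stmt8_general 𝒳 p hp D₁ D₂ h₁ a b hcov h₂undir h₂dir
end
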